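/- arXiv:2505.03643 — 4 statements merged into one kernel-verified Lean document; each statement's English description precedes it below -/
import Mathlib

section
/- Let E be a real normed vector space, f : E → E, G ⊆ E, k a natural number, x_d ∈ E and ε > 0. Suppose every x with ‖x − x_d‖ < ε satisfies f^[k](x) ∈ interior(G), and suppose there exists x₀ with ‖x₀ − x_d‖ = ε and f^[k](x₀) ∉ interior(G). Then x₀ lies in the intersection of the frontier of closedBall(x_d, ε) (i.e., the sphere of radius ε about x_d) with the frontier of the set (f^[k])⁻¹(interior(G)). In particular this intersection of frontiers is nonempty, so the optimal ball is boundary coincident with the backward reachable set of interior(G). -/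
/-- Boundary-coincidence part of the paper's Lemma 3: if every point strictly
within distance `ε` of `x_d` reaches `interior G` under `f^[k]`, and there is
a point `x₀` at distance exactly `ε` which does not, then `x₀` lies in the
intersection of the frontier of the closed ball with the frontier of the
backward reachable set of `interior G`; in particular this intersection of
frontiers is nonempty. -/
theorem ball_boundary_coincident {E : Type*} [NormedAddCommGroup E]
    [NormedSpace ℝ E] (f : E → E) (G : Set E) (k : ℕ) (xd : E) (ε : ℝ)
    (hε : 0 < ε)
    (hin : ∀ x : E, ‖x - xd‖ < ε → f^[k] x ∈ interior G)
    (x₀ : E) (hx₀ : ‖x₀ - xd‖ = ε) (hx₀G : f^[k] x₀ ∉ interior G) :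
    x₀ ∈ frontier (Metric.closedBall xd ε) ∩
        frontier ((f^[k]) ⁻¹' (interior G)) ∧
    (frontier (Metric.closedBall xd ε) ∩
        frontier ((f^[k]) ⁻¹' (interior G))).Nonempty := by
  have hmem : x₀ ∈ frontier (Metric.closedBall xd ε) ∩
      frontier ((f^[k]) ⁻¹' (interior G)) := by
    constructor
    · rw [frontier_closedBall xd (ne_of_gt hε)]
      simpa [Metric.mem_sphere, dist_eq_norm] using hx₀
    · rw [frontier, Set.mem_diff]
      constructor
      · rw [Metric.mem_closure_iff]
        intro δ hδ
        set t : ℝ := max 0 (1 - δ / (2 * ε)) with ht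
        have ht0 : 0 ≤ t := le_max_left _ _
        have ht1 : t < 1 := by
          rcases max_cases 0 (1 - δ / (2 * ε)) with ⟨h, _⟩ | ⟨h, _⟩ <;> rw [ht, h]
          · norm_num
          · have : 0 < δ / (2 * ε) := by positivity
            linarith
        refine ⟨xd + t • (x₀ - xd), ?_, ?_⟩
        · apply hin
          have : ‖xd + t • (x₀ - xd) - xd‖ = t * ε := by
            rw [add_sub_cancel_left, norm_smul, Real.norm_eq_abs, abs_of_nonneg ht0, hx₀]
          rw [this]
          nlinarith
        · have : x₀ - (xd + t • (x₀ - xd)) = (1 - t) • (x₀ - xd) := by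
            rw [sub_smul, one_smul]; abel
          rw [dist_eq_norm, this, norm_smul, Real.norm_eq_abs,
            abs_of_nonneg (by linarith), hx₀]
          have h2 : 1 - t ≤ δ / (2 * ε) := by
            have := le_max_right 0 (1 - δ / (2 * ε)); linarith
          have h3 : (1 - t) * ε ≤ δ / (2 * ε) * ε := by nlinarith
          have h4 : δ / (2 * ε) * ε = δ / 2 := by field_simp
          linarith
      · intro h
        have h2 : x₀ ∈ (f^[k]) ⁻¹' (interior G) := interior_subset h
        exact hx₀G h2
  exact ⟨hmem, ⟨x₀, hmem⟩⟩
end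

section
/- Let x, t, l, u be real numbers with l ≤ x ≤ u. Then there exists δ ∈ {0, 1} (as a real number) satisfying t ≥ 0, t ≥ x, t ≤ u·δ, and t ≤ x − l·(1 − δ) if and only if t = max(x, 0). -/
/-- Correctness of the mixed-integer linear encoding of the ReLU function
`t = max(x, 0)` (Tjeng et al.): given bounds `l ≤ x ≤ u`, the constraints
have a binary solution `δ` iff `t = max x 0`. -/
theorem relu_milp_encoding (x t l u : ℝ) (hl : l ≤ x) (hu : x ≤ u) :
    (∃ δ : ℝ, (δ = 0 ∨ δ = 1) ∧ t ≥ 0 ∧ t ≥ x ∧ t ≤ u * δ ∧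
      t ≤ x - l * (1 - δ)) ↔ t = max x 0 := by
  constructor
  · rintro ⟨δ, (rfl | rfl), h0, hx, hu', hl'⟩
    · simp only [mul_zero] at hu'
      have ht : t = 0 := le_antisymm hu' h0
      have : x ≤ 0 := ht ▸ hx
      rw [ht, max_eq_right this]
    · simp only [sub_self, mul_zero, sub_zero] at hl'
      have ht : t = x := le_antisymm hl' hx
      rw [ht, max_eq_left (ht ▸ h0)]
  · rintro rfl
    rcases le_or_gt x 0 with h | h
    · exact ⟨0, Or.inl rfl, le_max_right _ _, le_max_left _ _,
        by simp [max_eq_right h], by simp [max_eq_right h]; linarith⟩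
    · exact ⟨1, Or.inr rfl, le_max_right _ _, le_max_left _ _,
        by simp [max_eq_left h.le]; linarith, by simp [max_eq_left h.le]⟩
end

section
/- Let ι be a finite nonempty index type, x, c : ι → ℝ, t ∈ ℝ, and δ : ι → ℝ with δ_i ∈ {0, 1} for every i and ∑_i δ_i = 1. If for every i it holds that x_i ≤ t and t ≤ x_i + c_i·(1 − δ_i), then t equals the maximum of the x_i (t = max_{i} x_i). -/
/-- Soundness of the mixed-integer linear encoding of `t = maxᵢ xᵢ`: if `δ`
is a vector of binary indicators summing to `1`, and `xᵢ ≤ t` and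
`t ≤ xᵢ + cᵢ·(1 − δᵢ)` for all `i`, then `t` is the maximum of the `xᵢ`. -/
theorem max_milp_encoding_sound {ι : Type*} [Fintype ι] [Nonempty ι]
    (x c : ι → ℝ) (t : ℝ) (δ : ι → ℝ) (hδ : ∀ i, δ i = 0 ∨ δ i = 1)
    (hsum : ∑ i, δ i = 1)
    (h : ∀ i, x i ≤ t ∧ t ≤ x i + c i * (1 - δ i)) :
    t = ⨆ i, x i := by
  obtain ⟨i, hi⟩ : ∃ i, δ i = 1 := by
    by_contra hc
    push_neg at hc
    have : ∀ j ∈ Finset.univ, δ j = 0 := fun j _ => (hδ j).resolve_right (hc j)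
    rw [Finset.sum_eq_zero this] at hsum
    norm_num at hsum
  have hle : t ≤ x i := by
    have := (h i).2
    rw [hi] at this
    simpa using this
  refine le_antisymm (hle.trans (le_ciSup ⟨t, ?_⟩ i)) (ciSup_le fun j => (h j).1)
  rintro y ⟨j, rfl⟩
  exact (h j).1
end

section
/- Let ι be a finite index type with at least two elements, and let l, u, x : ι → ℝ with l_i ≤ x_i ≤ u_i for every i. For each i define umax_i = max_{j ≠ i} u_j, and let t = max_i x_i. Then there exists δ : ι → ℝ with δ_i ∈ {0, 1} for every i, ∑_i δ_i = 1, and for every i: x_i ≤ t and t ≤ x_i + (umax_i − l_i)·(1 − δ_i). -/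
/-- Completeness of the mixed-integer linear encoding of `t = maxᵢ xᵢ`:
with bounds `lᵢ ≤ xᵢ ≤ uᵢ`, `umaxᵢ = max_{j ≠ i} uⱼ`, and `t = maxᵢ xᵢ`,
there is a vector `δ` of binary indicators summing to `1` satisfying all
the big-M constraints. -/
theorem max_milp_encoding_complete {ι : Type*} [Fintype ι] [Nontrivial ι]
    (l u x : ι → ℝ) (hbd : ∀ i, l i ≤ x i ∧ x i ≤ u i)
    (umax : ι → ℝ) (humax : ∀ i, umax i = ⨆ j : {j : ι // j ≠ i}, u j.1)
    (t : ℝ) (ht : t = ⨆ i, x i) :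
    ∃ δ : ι → ℝ, (∀ i, δ i = 0 ∨ δ i = 1) ∧ (∑ i, δ i = 1) ∧
      ∀ i, x i ≤ t ∧ t ≤ x i + (umax i - l i) * (1 - δ i) := by
  classical
  obtain ⟨i0, hi0⟩ := Finite.exists_max x
  have hxle : ∀ i, x i ≤ t := by
    intro i
    rw [ht]
    exact le_ciSup (Set.Finite.bddAbove (Set.finite_range x)) i
  have hti0 : t = x i0 := by
    rw [ht]
    exact le_antisymm (ciSup_le hi0) (le_ciSup (Set.Finite.bddAbove (Set.finite_range x)) i0)
  refine ⟨fun i => if i = i0 then 1 else 0, fun i => by by_cases h : i = i0 <;> simp [h], ?_, ?_⟩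
  · rw [Finset.sum_ite_eq' Finset.univ i0 (fun _ => (1:ℝ))]
    simp
  · intro i
    refine ⟨hxle i, ?_⟩
    by_cases h : i = i0
    · subst h; simp [hti0]
    · have humaxge : u i0 ≤ umax i := by
        rw [humax i]
        exact le_ciSup (f := fun j : {j : ι // j ≠ i} => u j.1) (Set.Finite.bddAbove (Set.finite_range _)) ⟨i0, fun hh => h hh.symm⟩
      have h1 : t ≤ umax i := hti0 ▸ (hbd i0).2.trans humaxge
      have h2 : l i ≤ x i := (hbd i).1
      simp [h]
      linarith
end
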